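/- Let a be real and let i ≥ 1 be an integer. The function A_i(x) = ∑_{k=1}^i (-1)^k C_{i-k}^{(-a)}(-x+1) [C_k^{(a)}(-1) C_k^{(a)}(x-2) − C_k^{(a)}(-2) C_k^{(a)}(x-1)] is a polynomial in x of degree at most i, and its coefficient of x^i equals h_i = ((−1)^i / i!) C_{i-1}^{(a)}(i−2). -/

import Mathlib

/-- Generalized binomial coefficient `x(x-1)⋯(x-k+1)/k!`. -/
noncomputable def genChoose (x : ℝ) (k : ℕ) : ℝ :=
  (∏ j ∈ Finset.range k, (x - (j : ℝ))) / (Nat.factorial k : ℝ)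

/-- The Charlier polynomial `C_n^{(a)}(x) = ∑_{k=0}^n (x choose k) (-a)^{n-k}/(n-k)!`. -/
noncomputable def charlier (a : ℝ) (n : ℕ) (x : ℝ) : ℝ :=
  ∑ k ∈ Finset.range (n + 1),
    genChoose x k * (-a) ^ (n - k) / (Nat.factorial (n - k) : ℝ)

/-- Charlier polynomial with integer index, with the convention `C_{-1}^{(a)} ≡ 0`. -/
noncomputable def charlierZ (a : ℝ) (n : ℤ) (x : ℝ) : ℝ :=
  if 0 ≤ n then charlier a n.toNat x else 0

/-- Forward difference operator `Δf(x) = f(x+1) - f(x)`. -/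
def fdiff (f : ℝ → ℝ) : ℝ → ℝ := fun x => f (x + 1) - f x

/-- Backward difference operator `∇f(x) = f(x) - f(x-1)`. -/
def bdiff (f : ℝ → ℝ) : ℝ → ℝ := fun x => f x - f (x - 1)

/-- The generalized Charlier polynomial
`C_n^{a,N}(x) = [1 + N(-1)^n C_n^{(a)}(-1)] C_n^{(a)}(x) - N(-1)^n C_n^{(a)}(0) C_n^{(a)}(x-1)`. -/
noncomputable def genCharlier (a N : ℝ) (n : ℕ) (x : ℝ) : ℝ :=
  (1 + N * (-1) ^ n * charlier a n (-1)) * charlier a n x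
    - N * (-1) ^ n * charlier a n 0 * charlier a n (x - 1)

/-- The coefficient `A_i(x)` (for `i ≥ 1`) of the difference equation. -/
noncomputable def Acoef (a : ℝ) (i : ℕ) (x : ℝ) : ℝ :=
  ∑ k ∈ Finset.Icc 1 i, (-1 : ℝ) ^ k * charlier (-a) (i - k) (-x + 1) *
    (charlier a k (-1) * charlier a k (x - 2) - charlier a k (-2) * charlier a k (x - 1))

/-- The coefficient `A_0 = (-1)^{n-1} C_{n-1}^{(a)}(-2)` (with `C_{-1}^{(a)} ≡ 0`). -/
noncomputable def A0coef (a : ℝ) (n : ℕ) : ℝ :=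
  (-1 : ℝ) ^ ((n : ℤ) - 1) * charlierZ a ((n : ℤ) - 1) (-2)

/-! Writing `(x choose k) = (descPochhammer ℝ k).eval x / k!` realises `C_n^{(a)}(σ x + c)`, for
`σ = ±1`, as a polynomial of degree `n` with leading coefficient `σ^n / n!`. Hence `A_i` is a
polynomial of degree at most `i` whose coefficient of `x^i` is
`(-1)^i / i! * ∑_k binom(i, k) (C_k(-1) - C_k(-2))`. The Pascal rule
`C_{n+1}(x + 1) = C_{n+1}(x) + C_n(x)` iterates to `C_n(x + n) = ∑_k binom(n, k) C_k(x)`, which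
collapses that sum to `C_i(i - 1) - C_i(i - 2) = C_{i-1}(i - 2)`. -/

open Polynomial Finset Nat

theorem Polynomial.coeff_comp_of_natDegree_le {R : Type*} [CommSemiring R] {p q : R[X]} {n : ℕ}
    (hp : p.natDegree ≤ n) (hq : q.natDegree ≤ 1) :
    (p.comp q).coeff n = p.coeff n * q.coeff 1 ^ n := by
  rw [comp_eq_sum_left, sum_over_range' _ (fun _ => by simp) (n + 1) (by omega),
    finsetSum_coeff, sum_range_succ, sum_eq_zero, zero_add, coeff_C_mul,
    ← coeff_pow_of_natDegree_le hq, mul_one]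
  intro j hj
  refine coeff_eq_zero_of_natDegree_lt (natDegree_C_mul_le _ _ |>.trans_lt ?_)
  exact (natDegree_pow_le_of_le j hq).trans_lt (by simpa using hj)

theorem genChoose_eq_eval_descPochhammer (x : ℝ) (k : ℕ) :
    genChoose x k = (descPochhammer ℝ k).eval x / k ! := by
  rw [genChoose, descPochhammer_eval_eq_prod_range]

theorem genChoose_succ_succ (x : ℝ) (k : ℕ) :
    genChoose (x + 1) (k + 1) = genChoose x (k + 1) + genChoose x k := by
  have hleft : (descPochhammer ℝ (k + 1)).eval (x + 1) = (x + 1) * (descPochhammer ℝ k).eval x := by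
    simp [descPochhammer_succ_left]
  rw [genChoose_eq_eval_descPochhammer, genChoose_eq_eval_descPochhammer,
    genChoose_eq_eval_descPochhammer, hleft, descPochhammer_succ_eval, Nat.factorial_succ]
  push_cast
  field_simp
  ring

@[simp]
theorem charlier_zero (a x : ℝ) : charlier a 0 x = 1 := by
  simp [charlier, genChoose]

theorem charlier_succ_add_one (a : ℝ) (n : ℕ) (x : ℝ) :
    charlier a (n + 1) (x + 1) = charlier a (n + 1) x + charlier a n x := by
  simp only [charlier]
  rw [sum_range_succ' _ (n + 1), sum_range_succ' _ (n + 1), add_assoc]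
  simp only [genChoose_succ_succ, add_mul, add_div, sum_add_distrib, Nat.add_sub_add_right]
  simp only [genChoose, range_zero, prod_empty]
  ring

theorem charlier_add_natCast (a : ℝ) (m n : ℕ) (x : ℝ) :
    charlier a n (x + m) = ∑ j ∈ range (n + 1), (m.choose j : ℝ) * charlier a (n - j) x := by
  induction m generalizing n with
  | zero => simp [sum_range_succ']
  | succ m ih =>
    rcases n with _ | n
    · simp
    · rw [Nat.cast_succ, ← add_assoc, charlier_succ_add_one, ih, ih, sum_range_succ' _ (n + 1),
        sum_range_succ' _ (n + 1)]
      simp only [Nat.choose_succ_succ, Nat.cast_add, add_mul, sum_add_distrib,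
        Nat.add_sub_add_right, Nat.choose_zero_right]
      ring

theorem charlier_add_self (a : ℝ) (n : ℕ) (x : ℝ) :
    charlier a n (x + n) = ∑ k ∈ range (n + 1), (n.choose k : ℝ) * charlier a k x := by
  rw [charlier_add_natCast, ← sum_range_reflect]
  refine sum_congr rfl fun k hk => ?_
  have hk : k ≤ n := Nat.lt_succ_iff.mp (mem_range.mp hk)
  rw [add_tsub_cancel_right, Nat.choose_symm hk, Nat.sub_sub_self hk]

noncomputable def charlierPoly (a : ℝ) (n : ℕ) : ℝ[X] :=
  ∑ k ∈ range (n + 1), C ((-a) ^ (n - k) / (n - k)! / k !) * descPochhammer ℝ k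

@[simp]
theorem eval_charlierPoly (a : ℝ) (n : ℕ) (x : ℝ) : (charlierPoly a n).eval x = charlier a n x := by
  simp only [charlierPoly, charlier, eval_finsetSum, eval_mul, eval_C,
    genChoose_eq_eval_descPochhammer]
  exact sum_congr rfl fun k _ => by ring

theorem natDegree_charlierPoly_le (a : ℝ) (n : ℕ) : (charlierPoly a n).natDegree ≤ n := by
  refine natDegree_sum_le_of_forall_le _ _ fun k hk => (natDegree_C_mul_le _ _).trans ?_
  rw [descPochhammer_natDegree]
  exact Nat.lt_succ_iff.mp (mem_range.mp hk)

theorem coeff_charlierPoly_self (a : ℝ) (n : ℕ) : (charlierPoly a n).coeff n = 1 / n ! := by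
  have hmonic := (monic_descPochhammer ℝ n).coeff_natDegree
  rw [descPochhammer_natDegree] at hmonic
  rw [charlierPoly, finsetSum_coeff, sum_range_succ, sum_eq_zero, zero_add, coeff_C_mul, hmonic]
  · simp
  · intro k hk
    refine coeff_eq_zero_of_natDegree_lt ((natDegree_C_mul_le _ _).trans_lt ?_)
    rwa [descPochhammer_natDegree, ← mem_range]

theorem natDegree_charlierPoly_comp_le (a : ℝ) (n : ℕ) {q : ℝ[X]} (hq : q.natDegree ≤ 1) :
    ((charlierPoly a n).comp q).natDegree ≤ n :=
  natDegree_comp_le.trans (by nlinarith [natDegree_charlierPoly_le a n])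

theorem coeff_charlierPoly_comp (a : ℝ) (n : ℕ) {q : ℝ[X]} (hq : q.natDegree ≤ 1) :
    ((charlierPoly a n).comp q).coeff n = q.coeff 1 ^ n / n ! := by
  rw [coeff_comp_of_natDegree_le (natDegree_charlierPoly_le a n) hq, coeff_charlierPoly_self]
  ring

noncomputable def charlierBracketPoly (a : ℝ) (k : ℕ) : ℝ[X] :=
  C (charlier a k (-1)) * (charlierPoly a k).comp (X - 2) -
    C (charlier a k (-2)) * (charlierPoly a k).comp (X - 1)

theorem natDegree_charlierBracketPoly_le (a : ℝ) (k : ℕ) :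
    (charlierBracketPoly a k).natDegree ≤ k :=
  (natDegree_sub_le _ _).trans <| max_le
    ((natDegree_C_mul_le _ _).trans (natDegree_charlierPoly_comp_le _ _ (by compute_degree)))
    ((natDegree_C_mul_le _ _).trans (natDegree_charlierPoly_comp_le _ _ (by compute_degree)))

theorem coeff_charlierBracketPoly_self (a : ℝ) (k : ℕ) :
    (charlierBracketPoly a k).coeff k = (charlier a k (-1) - charlier a k (-2)) / k ! := by
  rw [charlierBracketPoly, coeff_sub, coeff_C_mul, coeff_C_mul,
    coeff_charlierPoly_comp _ _ (by compute_degree),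
    coeff_charlierPoly_comp _ _ (by compute_degree)]
  simp only [coeff_sub, coeff_X_one, coeff_one, coeff_ofNat_succ, one_ne_zero, if_false, sub_zero,
    one_pow]
  ring

noncomputable def acoefPoly (a : ℝ) (i : ℕ) : ℝ[X] :=
  ∑ k ∈ Icc 1 i,
    C ((-1) ^ k) * ((charlierPoly (-a) (i - k)).comp (-X + 1) * charlierBracketPoly a k)

theorem eval_acoefPoly (a : ℝ) (i : ℕ) (x : ℝ) : (acoefPoly a i).eval x = Acoef a i x := by
  simp only [acoefPoly, Acoef, charlierBracketPoly, eval_finsetSum]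
  refine sum_congr rfl fun k _ => ?_
  simp only [eval_mul, eval_C, eval_comp, eval_charlierPoly, eval_sub, eval_add, eval_neg, eval_X,
    eval_one, eval_ofNat]
  ring

theorem natDegree_acoefPoly_le (a : ℝ) (i : ℕ) : (acoefPoly a i).natDegree ≤ i := by
  refine natDegree_sum_le_of_forall_le _ _ fun k hk => (natDegree_C_mul_le _ _).trans ?_
  refine natDegree_mul_le.trans ?_
  have := natDegree_charlierPoly_comp_le (-a) (i - k) (q := -X + 1) (by compute_degree)
  have := natDegree_charlierBracketPoly_le a k
  have := (mem_Icc.mp hk).2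
  omega

theorem coeff_acoefPoly_self (a : ℝ) (i : ℕ) :
    (acoefPoly a i).coeff i = (-1) ^ i / i ! *
      ∑ k ∈ Icc 1 i, (i.choose k : ℝ) * (charlier a k (-1) - charlier a k (-2)) := by
  rw [acoefPoly, finsetSum_coeff, mul_sum]
  refine sum_congr rfl fun k hk => ?_
  have hk : k ≤ i := (mem_Icc.mp hk).2
  have hprod := coeff_mul_add_eq_of_natDegree_le
    (natDegree_charlierPoly_comp_le (-a) (i - k) (q := -X + 1) (by compute_degree))
    (natDegree_charlierBracketPoly_le a k)
  rw [Nat.sub_add_cancel hk] at hprod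
  rw [coeff_C_mul, hprod, coeff_charlierPoly_comp _ _ (by compute_degree),
    coeff_charlierBracketPoly_self, Nat.cast_choose ℝ hk]
  have hsign : (-1 : ℝ) ^ i = (-1) ^ k * (-1) ^ (i - k) := by rw [← pow_add, Nat.add_sub_cancel' hk]
  simp only [coeff_add, coeff_neg, coeff_X_one, coeff_one, one_ne_zero, if_false, add_zero, hsign]
  field_simp

theorem sum_choose_mul_charlier_sub (a : ℝ) (n : ℕ) (x : ℝ) :
    ∑ k ∈ Icc 1 (n + 1), ((n + 1).choose k : ℝ) * (charlier a k (x + 1) - charlier a k x) =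
      charlier a n (x + (n + 1)) := by
  have hfull : ∑ k ∈ range (n + 1 + 1),
      ((n + 1).choose k : ℝ) * (charlier a k (x + 1) - charlier a k x) =
        charlier a n (x + (n + 1)) := by
    simp only [mul_sub, sum_sub_distrib]
    rw [← Nat.cast_succ, ← charlier_add_self, ← charlier_add_self, add_right_comm,
      charlier_succ_add_one, add_sub_cancel_left]
  rw [← hfull, range_eq_Ico, sum_eq_sum_Ico_succ_bot (by omega), ← Ico_add_one_right_eq_Icc]
  simp only [charlier_zero, sub_self, mul_zero, zero_add]

/-- For `i ≥ 1`, `A_i` is a polynomial in `x` of degree at most `i`, whose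
coefficient of `x^i` equals `h_i = ((-1)^i / i!) C_{i-1}^{(a)}(i-2)`. -/
theorem Acoef_is_polynomial (a : ℝ) (i : ℕ) (hi : 1 ≤ i) :
    ∃ p : Polynomial ℝ, (∀ x : ℝ, Acoef a i x = p.eval x) ∧
      p.degree ≤ (i : ℕ) ∧
      p.coeff i = (-1 : ℝ) ^ i / (Nat.factorial i : ℝ) * charlier a (i - 1) ((i : ℝ) - 2) := by
  obtain ⟨n, rfl⟩ : ∃ n, i = n + 1 := ⟨i - 1, by omega⟩
  refine ⟨acoefPoly a (n + 1), fun x => (eval_acoefPoly a (n + 1) x).symm,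
    degree_le_of_natDegree_le (natDegree_acoefPoly_le a (n + 1)), ?_⟩
  have hx : ((n + 1 : ℕ) : ℝ) - 2 = -2 + (n + 1) := by push_cast; ring
  rw [coeff_acoefPoly_self, Nat.add_sub_cancel, hx, ← sum_choose_mul_charlier_sub]
  norm_num
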